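/- Let μ be a probability measure on ℝ such that for every integer k ≥ 1 the k-fold convolution power μ^{∗k} is mutually singular with Lebesgue measure. Let ν = p_*μ be the pushforward of μ under the canonical quotient map p : ℝ → ℝ/ℤ. Then for every integer k ≥ 1, the k-fold convolution power ν^{∗k} is mutually singular with the Haar measure on ℝ/ℤ. -/

import Mathlib

/-!
Pushing forward along the quotient map `p : ℝ → ℝ/ℤ` commutes with convolution, since `p` is an
additive homomorphism, so `ν^{∗k} = p₊(μ^{∗k})`. Mutual singularity survives the pushforward: if
`μ^{∗k}` is carried by `s` and `sᶜ` is Lebesgue-null, then the saturation `sᶜ + ℤ` of `sᶜ` is still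
null, being a countable union of translates, so its image in the circle is Haar-null while its
complement in the circle pulls back into `s`.
-/

open MeasureTheory

theorem Real.fact_zero_lt_one : Fact ((0 : ℝ) < 1) := ⟨zero_lt_one⟩

attribute [local instance] Real.fact_zero_lt_one

/-- The `k`-fold convolution power of a measure on an additive monoid, with the convention that
the zeroth power is the Dirac mass at `0`. -/
noncomputable def convPow {G : Type*} [AddMonoid G] [MeasurableSpace G]
    (μ : Measure G) : ℕ → Measure G
  | 0 => Measure.dirac 0
  | n + 1 => (convPow μ n).conv μ

open Measure Set

section ConvPow

variable {G H : Type*} [AddMonoid G] [MeasurableSpace G]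

lemma sFinite_convPow (μ : Measure G) [SFinite μ] (n : ℕ) : SFinite (convPow μ n) := by
  induction n with
  | zero => exact inferInstanceAs (SFinite (dirac (0 : G)))
  | succ n ih => exact sfinite_conv_of_sfinite _ _

variable [MeasurableAdd₂ G] [AddMonoid H] [MeasurableSpace H] [MeasurableAdd₂ H]

lemma convPow_map_addMonoidHom (μ : Measure G) [SFinite μ] (f : G →+ H) (hf : Measurable f)
    (n : ℕ) : convPow (μ.map f) n = (convPow μ n).map f := by
  induction n with
  | zero => simp only [convPow, map_dirac' hf, map_zero]
  | succ n ih =>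
    have := sFinite_convPow μ n
    rw [convPow, convPow, map_conv_addMonoidHom f hf, ih]

end ConvPow

lemma MeasureTheory.Measure.MutuallySingular.map_quotientAddGroup_mk {G : Type*} [AddGroup G]
    [MeasurableSpace G] [MeasurableAdd G] {Γ : AddSubgroup G} [Countable Γ] {σ ν : Measure G}
    [ν.IsAddRightInvariant] (h : σ ⟂ₘ ν) :
    σ.map (QuotientAddGroup.mk : G → G ⧸ Γ) ⟂ₘ ν.map (QuotientAddGroup.mk : G → G ⧸ Γ) := by
  obtain ⟨s, hs, hσs, hνs⟩ := h
  have hmk : Measurable (QuotientAddGroup.mk : G → G ⧸ Γ) := QuotientAddGroup.measurable_coe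
  have hsat : QuotientAddGroup.mk ⁻¹' ((QuotientAddGroup.mk : G → G ⧸ Γ) '' sᶜ)
      = ⋃ γ : Γ, (· + (γ : G)) ⁻¹' sᶜ :=
    QuotientAddGroup.preimage_image_mk Γ sᶜ
  have hsat_meas : MeasurableSet ((QuotientAddGroup.mk : G → G ⧸ Γ) '' sᶜ) := by
    rw [measurableSet_quotient]
    change MeasurableSet (QuotientAddGroup.mk ⁻¹' _)
    rw [hsat]
    exact .iUnion fun γ => measurable_add_const _ hs.compl
  refine ⟨_, hsat_meas.compl, ?_, ?_⟩
  · rw [map_apply hmk hsat_meas.compl, preimage_compl, hsat]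
    refine measure_mono_null (fun x hx => ?_) hσs
    by_contra hxs
    exact hx (mem_iUnion.2 ⟨0, by simpa using hxs⟩)
  · rw [compl_compl, map_apply hmk hsat_meas, hsat]
    exact measure_iUnion_null fun γ => by rwa [measure_preimage_add_right]

lemma AddCircle.volume_absolutelyContinuous_map_mk (T : ℝ) [Fact (0 < T)] :
    (volume : Measure (AddCircle T)) ≪ (volume : Measure ℝ).map ((↑) : ℝ → AddCircle T) := by
  rw [← (AddCircle.measurePreserving_mk T 0).map_eq]
  exact (absolutelyContinuous_of_le restrict_le_self).map AddCircle.measurable_mk'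

lemma MeasureTheory.Measure.MutuallySingular.map_addCircle_mk (T : ℝ) [Fact (0 < T)]
    {σ : Measure ℝ} (h : σ ⟂ₘ volume) :
    σ.map ((↑) : ℝ → AddCircle T) ⟂ₘ (volume : Measure (AddCircle T)) :=
  h.map_quotientAddGroup_mk.mono_ac .rfl (AddCircle.volume_absolutelyContinuous_map_mk T)

/-- If every convolution power `μ^{∗k}` (`k ≥ 1`) of a probability measure `μ` on `ℝ` is
mutually singular with Lebesgue measure, then every convolution power `ν^{∗k}` (`k ≥ 1`) of
the pushforward `ν = p₊μ` on the circle `ℝ/ℤ` is mutually singular with Haar measure. -/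
theorem convPow_pushforward_mutuallySingular_haar
    (μ : Measure ℝ) [IsProbabilityMeasure μ]
    (h : ∀ k : ℕ, 1 ≤ k → (convPow μ k).MutuallySingular (volume : Measure ℝ))
    (k : ℕ) (hk : 1 ≤ k) :
    (convPow (μ.map ((↑) : ℝ → AddCircle (1 : ℝ))) k).MutuallySingular
      (volume : Measure (AddCircle (1 : ℝ))) := by
  have hmap : convPow (μ.map ((↑) : ℝ → AddCircle (1 : ℝ))) k = (convPow μ k).map (↑) :=
    convPow_map_addMonoidHom μ (QuotientAddGroup.mk' _) AddCircle.measurable_mk' k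
  rw [hmap]
  exact (h k hk).map_addCircle_mk 1
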